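/- arXiv:2011.15080 — 2 statements merged into one kernel-verified Lean document; each statement's English description precedes it below -/
import Mathlib

section
/- Let G be an LLT graph with three distinct vertices a, b, c such that: the only edges of G among {a,b,c} are a double edge (a,b), a double edge (b,c), and a type I edge (a,c); and for every vertex v ∉ {a,b,c} and every edge type t ∈ {I, II, double}, (b,v) is an edge of type t if and only if (c,v) is an edge of type t, and (v,b) is an edge of type t if and only if (v,c) is an edge of type t. Let G′ be obtained from G by replacing the double edge (a,b) by a type I edge (a,b) and deleting the type I edge (a,c), keeping all other edges unchanged. Then LLT(G) = q·LLT(G′). -/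
/-- An LLT graph: a directed graph with three kinds of edges. -/
structure LLTGraph (V : Type) where
  E1 : Finset (V × V)
  E2 : Finset (V × V)
  Ed : Finset (V × V)

/-- The variable `q`, viewed inside `ℤ[q][x₁,…,x_N]`. -/
noncomputable def lltQ (N : ℕ) : MvPolynomial (Fin N) (Polynomial ℤ) :=
  MvPolynomial.C Polynomial.X

/-- The LLT generating function of an LLT graph, read as a polynomial identity
in `ℤ[q][x₁,…,x_N]`, colorings taking values in `{1,…,N}` (as `Fin N`). -/
noncomputable def LLT {V : Type} [Fintype V] [DecidableEq V] (G : LLTGraph V) (N : ℕ) :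
    MvPolynomial (Fin N) (Polynomial ℤ) :=
  ∑ f : V → Fin N,
    ((∏ e ∈ G.E1, if f e.2 < f e.1 then 1 else 0) *
      (∏ e ∈ G.E2, if f e.2 ≤ f e.1 then 1 else 0) *
      (∏ e ∈ G.Ed,
        ((if f e.2 < f e.1 then lltQ N else 0) + (if f e.1 ≤ f e.2 then 1 else 0)))) *
    ∏ v : V, MvPolynomial.X (f v)

/-- `K_n^⇒` : the complete LLT graph on `{1,…,n}` whose only edges are
double edges `i ⇒ j` for `i < j`. -/
def KnGraph (n : ℕ) : LLTGraph (Fin n) where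
  E1 := ∅
  E2 := ∅
  Ed := Finset.univ.filter fun p => p.1 < p.2

/- ### Auxiliary material for the proof -/

noncomputable def lltI {N : ℕ} (x y : Fin N) : MvPolynomial (Fin N) (Polynomial ℤ) :=
  if y < x then 1 else 0

noncomputable def lltD {N : ℕ} (x y : Fin N) : MvPolynomial (Fin N) (Polynomial ℤ) :=
  (if y < x then lltQ N else 0) + (if x ≤ y then 1 else 0)

set_option maxHeartbeats 2000000 in
lemma lltKey {N : ℕ} (α β γ : Fin N) :
    (lltD α β * lltD β γ * lltI α γ - lltQ N * (lltI α β * lltD β γ))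
      + (lltD α γ * lltD γ β * lltI α β - lltQ N * (lltI α γ * lltD γ β)) = 0 := by
  unfold lltI lltD
  split_ifs <;> first | (exfalso; omega) | ring

set_option maxHeartbeats 1000000 in
lemma lltKeyFix {N : ℕ} (α β : Fin N) :
    lltD α β * lltD β β * lltI α β - lltQ N * (lltI α β * lltD β β) = 0 := by
  unfold lltI lltD
  split_ifs <;> first | (exfalso; omega) | ring

lemma prod_swap_pairs {V : Type} [DecidableEq V] {M : Type} [CommMonoid M] (b c : V)
    (T : Finset (V × V)) (hT : ∀ e ∈ T, ((Equiv.swap b c) e.1, (Equiv.swap b c) e.2) ∈ T)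
    (g : V × V → M) :
    ∏ e ∈ T, g ((Equiv.swap b c) e.1, (Equiv.swap b c) e.2) = ∏ e ∈ T, g e :=
  Finset.prod_nbij' (fun e => ((Equiv.swap b c) e.1, (Equiv.swap b c) e.2))
    (fun e => ((Equiv.swap b c) e.1, (Equiv.swap b c) e.2)) hT hT
    (fun e _ => by simp) (fun e _ => by simp) (fun e _ => rfl)

/-- The "external" part of the weight of a coloring: all edges other than the
three distinguished ones, together with the monomial. -/
noncomputable def lltExt {V : Type} [Fintype V] [DecidableEq V] (G : LLTGraph V)
    (a b c : V) (N : ℕ) (f : V → Fin N) : MvPolynomial (Fin N) (Polynomial ℤ) :=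
  ((∏ e ∈ G.E1.erase (a, c), lltI (f e.1) (f e.2)) *
    (∏ e ∈ G.E2, if f e.2 ≤ f e.1 then 1 else 0) *
    (∏ e ∈ (G.Ed.erase (a, b)).erase (b, c), lltD (f e.1) (f e.2))) *
  ∏ v : V, MvPolynomial.X (f v)

/-- (Local form of the Schröder relation (B).) Let `a,b,c` be
distinct vertices of `G` whose only edges among them are double edges `(a,b)`,
`(b,c)` and a type I edge `(a,c)`, and such that `b` and `c` are connected to
every other vertex in exactly the same way. Replacing the double edge `(a,b)`
by a type I edge `(a,b)` and deleting the type I edge `(a,c)` divides the LLT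
function by `q`. -/
theorem llt_local_relation_B {V : Type} [Fintype V] [DecidableEq V] (G : LLTGraph V)
    (h12 : Disjoint G.E1 G.E2) (h1d : Disjoint G.E1 G.Ed) (h2d : Disjoint G.E2 G.Ed)
    (a b c : V) (hab : a ≠ b) (hac : a ≠ c) (hbc : b ≠ c)
    (habd : (a, b) ∈ G.Ed) (hbcd : (b, c) ∈ G.Ed) (hac1 : (a, c) ∈ G.E1)
    (honly : ∀ x y : V, x ∈ ({a, b, c} : Set V) → y ∈ ({a, b, c} : Set V) →
      ((x, y) ∈ G.E1 → (x, y) = (a, c)) ∧ ((x, y) ∉ G.E2) ∧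
      ((x, y) ∈ G.Ed → (x, y) = (a, b) ∨ (x, y) = (b, c)))
    (hsym : ∀ v : V, v ∉ ({a, b, c} : Set V) →
      (((b, v) ∈ G.E1 ↔ (c, v) ∈ G.E1) ∧ ((v, b) ∈ G.E1 ↔ (v, c) ∈ G.E1)) ∧
      (((b, v) ∈ G.E2 ↔ (c, v) ∈ G.E2) ∧ ((v, b) ∈ G.E2 ↔ (v, c) ∈ G.E2)) ∧
      (((b, v) ∈ G.Ed ↔ (c, v) ∈ G.Ed) ∧ ((v, b) ∈ G.Ed ↔ (v, c) ∈ G.Ed)))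
    (N : ℕ) :
    LLT G N =
      lltQ N *
        LLT ⟨insert (a, b) (G.E1.erase (a, c)), G.E2, G.Ed.erase (a, b)⟩ N := by
  classical
  have haS : a ∈ ({a, b, c} : Set V) := Or.inl rfl
  have hbS : b ∈ ({a, b, c} : Set V) := Or.inr (Or.inl rfl)
  have hcS : c ∈ ({a, b, c} : Set V) := Or.inr (Or.inr rfl)
  have swa : Equiv.swap b c a = a := Equiv.swap_apply_of_ne_of_ne hab hac
  have swv : ∀ v : V, v ∉ ({a, b, c} : Set V) → Equiv.swap b c v = v := by
    intro v hv
    simp only [Set.mem_insert_iff, Set.mem_singleton_iff, not_or] at hv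
    exact Equiv.swap_apply_of_ne_of_ne hv.2.1 hv.2.2
  -- generic closure lemma for edge sets with no internal edges and b/c-symmetry
  have closed : ∀ T : Finset (V × V),
      (∀ x y : V, x ∈ ({a, b, c} : Set V) → y ∈ ({a, b, c} : Set V) → (x, y) ∉ T) →
      (∀ v : V, v ∉ ({a, b, c} : Set V) →
        (((b, v) ∈ T ↔ (c, v) ∈ T) ∧ ((v, b) ∈ T ↔ (v, c) ∈ T))) →
      ∀ e ∈ T, ((Equiv.swap b c) e.1, (Equiv.swap b c) e.2) ∈ T := by
    rintro T hint hsm ⟨x, y⟩ he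
    by_cases hx : x ∈ ({a, b, c} : Set V) <;> by_cases hy : y ∈ ({a, b, c} : Set V)
    · exact absurd he (hint x y hx hy)
    · simp only [Set.mem_insert_iff, Set.mem_singleton_iff] at hx
      rw [swv y hy]
      rcases hx with rfl | rfl | rfl
      · rwa [swa]
      · rw [Equiv.swap_apply_left]; exact ((hsm y hy).1).mp he
      · rw [Equiv.swap_apply_right]; exact ((hsm y hy).1).mpr he
    · simp only [Set.mem_insert_iff, Set.mem_singleton_iff] at hy
      rw [swv x hx]
      rcases hy with rfl | rfl | rfl
      · rwa [swa]
      · rw [Equiv.swap_apply_left]; exact ((hsm x hx).2).mp he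
      · rw [Equiv.swap_apply_right]; exact ((hsm x hx).2).mpr he
    · rwa [swv x hx, swv y hy]
  -- membership lemmas for the erased sets
  have memT1 : ∀ p : V × V, p ≠ (a, c) → (p ∈ G.E1.erase (a, c) ↔ p ∈ G.E1) :=
    fun p h => by rw [Finset.mem_erase]; exact and_iff_right h
  have memTd : ∀ p : V × V, p ≠ (a, b) → p ≠ (b, c) →
      (p ∈ (G.Ed.erase (a, b)).erase (b, c) ↔ p ∈ G.Ed) := by
    intro p h1 h2
    rw [Finset.mem_erase, Finset.mem_erase]
    tauto
  -- closure of the three external edge sets under the swap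
  have hT1 : ∀ e ∈ G.E1.erase (a, c),
      ((Equiv.swap b c) e.1, (Equiv.swap b c) e.2) ∈ G.E1.erase (a, c) := by
    refine closed _ ?_ ?_
    · intro x y hx hy h
      have h' := Finset.mem_erase.mp h
      exact h'.1 ((honly x y hx hy).1 h'.2)
    · intro v hv
      have hv' : v ≠ a ∧ v ≠ b ∧ v ≠ c := by
        simpa [Set.mem_insert_iff, not_or] using hv
      constructor
      · rw [memT1 _ (fun h => hab (congrArg Prod.fst h).symm),
          memT1 _ (fun h => hac (congrArg Prod.fst h).symm)]
        exact (hsym v hv).1.1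
      · rw [memT1 _ (fun h => hbc (congrArg Prod.snd h)),
          memT1 _ (fun h => hv'.1 (congrArg Prod.fst h))]
        exact (hsym v hv).1.2
  have hT2 : ∀ e ∈ G.E2, ((Equiv.swap b c) e.1, (Equiv.swap b c) e.2) ∈ G.E2 :=
    closed _ (fun x y hx hy h => (honly x y hx hy).2.1 h) (fun v hv => (hsym v hv).2.1)
  have hTd : ∀ e ∈ (G.Ed.erase (a, b)).erase (b, c),
      ((Equiv.swap b c) e.1, (Equiv.swap b c) e.2) ∈ (G.Ed.erase (a, b)).erase (b, c) := by
    refine closed _ ?_ ?_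
    · intro x y hx hy h
      have h1 := Finset.mem_erase.mp h
      have h2 := Finset.mem_erase.mp h1.2
      rcases (honly x y hx hy).2.2 h2.2 with h3 | h3
      · exact h2.1 h3
      · exact h1.1 h3
    · intro v hv
      have hv' : v ≠ a ∧ v ≠ b ∧ v ≠ c := by
        simpa [Set.mem_insert_iff, not_or] using hv
      constructor
      · rw [memTd _ (fun h => hab (congrArg Prod.fst h).symm)
            (fun h => hv'.2.2 (congrArg Prod.snd h)),
          memTd _ (fun h => hac (congrArg Prod.fst h).symm)
            (fun h => hbc (congrArg Prod.fst h).symm)]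
        exact (hsym v hv).2.2.1
      · rw [memTd _ (fun h => hv'.1 (congrArg Prod.fst h))
            (fun h => hv'.2.1 (congrArg Prod.fst h)),
          memTd _ (fun h => hbc (congrArg Prod.snd h).symm)
            (fun h => hv'.2.1 (congrArg Prod.fst h))]
        exact (hsym v hv).2.2.2
  -- invariance of the external weight under swapping b and c
  have hExt : ∀ f : V → Fin N,
      lltExt G a b c N (fun v => f (Equiv.swap b c v)) = lltExt G a b c N f := by
    intro f
    have m1 := prod_swap_pairs b c (G.E1.erase (a, c)) hT1
      (fun e => (lltI (f e.1) (f e.2) : MvPolynomial (Fin N) (Polynomial ℤ)))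
    have m2 := prod_swap_pairs b c G.E2 hT2
      (fun e => if f e.2 ≤ f e.1 then (1 : MvPolynomial (Fin N) (Polynomial ℤ)) else 0)
    have m3 := prod_swap_pairs b c ((G.Ed.erase (a, b)).erase (b, c)) hTd
      (fun e => (lltD (f e.1) (f e.2) : MvPolynomial (Fin N) (Polynomial ℤ)))
    have m4 := Equiv.prod_comp (Equiv.swap b c)
      (fun v => (MvPolynomial.X (f v) : MvPolynomial (Fin N) (Polynomial ℤ)))
    simp only [lltExt]
    rw [show (∏ e ∈ G.E1.erase (a, c), lltI (f (Equiv.swap b c e.1)) (f (Equiv.swap b c e.2)))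
        = ∏ e ∈ G.E1.erase (a, c), lltI (f e.1) (f e.2) from m1,
      show (∏ e ∈ G.E2, if f (Equiv.swap b c e.2) ≤ f (Equiv.swap b c e.1)
          then (1 : MvPolynomial (Fin N) (Polynomial ℤ)) else 0)
        = ∏ e ∈ G.E2, if f e.2 ≤ f e.1 then 1 else 0 from m2,
      show (∏ e ∈ (G.Ed.erase (a, b)).erase (b, c),
            lltD (f (Equiv.swap b c e.1)) (f (Equiv.swap b c e.2)))
        = ∏ e ∈ (G.Ed.erase (a, b)).erase (b, c), lltD (f e.1) (f e.2) from m3,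
      show (∏ v : V, (MvPolynomial.X (f (Equiv.swap b c v)) : MvPolynomial (Fin N) (Polynomial ℤ)))
        = ∏ v : V, MvPolynomial.X (f v) from m4]
  -- the per-coloring decomposition of the two weights
  have hnm : ((a, b) : V × V) ∉ G.E1.erase (a, c) := by
    intro h
    exact hbc (congrArg Prod.snd ((honly a b haS hbS).1 (Finset.mem_erase.mp h).2))
  have hbc' : ((b, c) : V × V) ∈ G.Ed.erase (a, b) :=
    Finset.mem_erase.mpr ⟨fun h => hbc (congrArg Prod.snd h).symm, hbcd⟩
  have hterm : ∀ f : V → Fin N,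
      ((∏ e ∈ G.E1, if f e.2 < f e.1 then 1 else 0) *
          (∏ e ∈ G.E2, if f e.2 ≤ f e.1 then 1 else 0) *
          (∏ e ∈ G.Ed,
            ((if f e.2 < f e.1 then lltQ N else 0) + (if f e.1 ≤ f e.2 then 1 else 0)))) *
        (∏ v : V, MvPolynomial.X (f v))
      - lltQ N *
        (((∏ e ∈ insert (a, b) (G.E1.erase (a, c)), if f e.2 < f e.1 then 1 else 0) *
          (∏ e ∈ G.E2, if f e.2 ≤ f e.1 then 1 else 0) *
          (∏ e ∈ G.Ed.erase (a, b),
            ((if f e.2 < f e.1 then lltQ N else 0) + (if f e.1 ≤ f e.2 then 1 else 0)))) *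
        (∏ v : V, MvPolynomial.X (f v)))
      = (lltD (f a) (f b) * lltD (f b) (f c) * lltI (f a) (f c)
          - lltQ N * (lltI (f a) (f b) * lltD (f b) (f c))) * lltExt G a b c N f := by
    intro f
    have e1 := (Finset.mul_prod_erase G.E1
      (fun e => if f e.2 < f e.1 then (1 : MvPolynomial (Fin N) (Polynomial ℤ)) else 0) hac1).symm
    have ed1 := (Finset.mul_prod_erase G.Ed
      (fun e => ((if f e.2 < f e.1 then lltQ N else 0) +
        (if f e.1 ≤ f e.2 then (1 : MvPolynomial (Fin N) (Polynomial ℤ)) else 0))) habd).symm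
    have ed2 := (Finset.mul_prod_erase (G.Ed.erase (a, b))
      (fun e => ((if f e.2 < f e.1 then lltQ N else 0) +
        (if f e.1 ≤ f e.2 then (1 : MvPolynomial (Fin N) (Polynomial ℤ)) else 0))) hbc').symm
    have ei := Finset.prod_insert (f := fun e : V × V =>
      if f e.2 < f e.1 then (1 : MvPolynomial (Fin N) (Polynomial ℤ)) else 0) hnm
    rw [e1, ed1, ed2, ei]
    simp only [lltExt, lltI, lltD]
    ring
  -- now sum over all colorings, pairing f with f ∘ (swap b c)
  rw [← sub_eq_zero]
  simp only [LLT, Finset.mul_sum]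
  rw [← Finset.sum_sub_distrib]
  simp only [hterm]
  refine Finset.sum_involution (fun f _ => fun v => f (Equiv.swap b c v)) ?_ ?_
    (fun f _ => Finset.mem_univ _) ?_
  · intro f _
    simp only [swa, Equiv.swap_apply_left, Equiv.swap_apply_right, hExt f]
    linear_combination lltKey (f a) (f b) (f c) * lltExt G a b c N f
  · intro f _ h0 hfix
    apply h0
    have hfc : f b = f c := (congrFun hfix c).symm ▸ by
      have := congrFun hfix c
      simpa [Equiv.swap_apply_right] using this
    rw [← hfc, lltKeyFix, zero_mul]
  · intro f _
    funext v
    simp [Equiv.swap_apply_self]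
end

section
/- Let G be an LLT graph. For each subset S ⊆ Ed(G) of its double edges, let G_S be the LLT graph obtained from G by replacing every double edge in S by a type I edge with the same orientation and deleting every double edge not in S (keeping all type I and type II edges of G). Then LLT(G) = Σ_{S ⊆ Ed(G)} (q−1)^{|S|} · LLT(G_S). In particular, for the graph K_n^⇒ this gives LLT(K_n^⇒) = Σ_{S} (q−1)^{|S|} Σ_{f : f(i)>f(j) for all (i,j)∈S} x_{f(1)}⋯x_{f(n)}, the subgraph expansion underlying the e-positivity formula after the shift q ↦ q+1. -/
lemma llt_factor_eq {N : ℕ} (a b : Fin N) :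
    ((if b < a then lltQ N else 0) +
      (if a ≤ b then (1 : MvPolynomial (Fin N) (Polynomial ℤ)) else 0))
      = (lltQ N - 1) * (if b < a then 1 else 0) + 1 := by
  by_cases h : b < a
  · simp only [if_pos h, if_neg (not_le.mpr h), if_pos]
    ring
  · simp [h, not_lt.mp h]

lemma llt_expand {V : Type} [Fintype V] [DecidableEq V] (G : LLTGraph V)
    (h1d : Disjoint G.E1 G.Ed) (N : ℕ) :
    LLT G N = ∑ S ∈ G.Ed.powerset,
      (lltQ N - 1) ^ S.card * LLT ⟨G.E1 ∪ S, G.E2, ∅⟩ N := by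
  have key : ∀ f : V → Fin N,
      (∏ e ∈ G.Ed, ((if f e.2 < f e.1 then lltQ N else 0) +
          (if f e.1 ≤ f e.2 then 1 else 0)))
        = ∑ S ∈ G.Ed.powerset, (lltQ N - 1) ^ S.card *
            ∏ e ∈ S, (if f e.2 < f e.1 then (1 : MvPolynomial (Fin N) (Polynomial ℤ)) else 0) := by
    intro f
    calc (∏ e ∈ G.Ed, ((if f e.2 < f e.1 then lltQ N else 0) +
            (if f e.1 ≤ f e.2 then 1 else 0)))
        = ∏ e ∈ G.Ed, ((lltQ N - 1) * (if f e.2 < f e.1 then 1 else 0) + 1) :=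
          Finset.prod_congr rfl fun e _ => llt_factor_eq _ _
      _ = ∑ S ∈ G.Ed.powerset,
            (∏ e ∈ S, (lltQ N - 1) * (if f e.2 < f e.1 then 1 else 0)) *
              ∏ e ∈ G.Ed \ S, 1 := Finset.prod_add _ _ _
      _ = _ := by
          refine Finset.sum_congr rfl fun S hS => ?_
          rw [Finset.prod_const_one, mul_one, Finset.prod_mul_distrib,
            Finset.prod_const]
  calc LLT G N
      = ∑ f : V → Fin N, ∑ S ∈ G.Ed.powerset,
          (lltQ N - 1) ^ S.card *
            ((((∏ e ∈ G.E1, if f e.2 < f e.1 then 1 else 0) *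
                ∏ e ∈ S, if f e.2 < f e.1 then 1 else 0) *
              (∏ e ∈ G.E2, if f e.2 ≤ f e.1 then 1 else 0) * 1) *
            ∏ v : V, MvPolynomial.X (f v)) := by
        unfold LLT
        refine Finset.sum_congr rfl fun f _ => ?_
        rw [key f, Finset.mul_sum, Finset.sum_mul]
        refine Finset.sum_congr rfl fun S hS => ?_
        ring
    _ = ∑ S ∈ G.Ed.powerset, ∑ f : V → Fin N,
          (lltQ N - 1) ^ S.card *
            ((((∏ e ∈ G.E1, if f e.2 < f e.1 then 1 else 0) *
                ∏ e ∈ S, if f e.2 < f e.1 then 1 else 0) *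
              (∏ e ∈ G.E2, if f e.2 ≤ f e.1 then 1 else 0) * 1) *
            ∏ v : V, MvPolynomial.X (f v)) := Finset.sum_comm
    _ = _ := by
        refine Finset.sum_congr rfl fun S hS => ?_
        unfold LLT
        rw [Finset.mul_sum]
        refine Finset.sum_congr rfl fun f _ => ?_
        simp only [Finset.prod_empty]
        rw [Finset.prod_union (h1d.mono_right (Finset.mem_powerset.mp hS))]


set_option maxHeartbeats 1000000 in
open Classical in
/-- Subgraph expansion of the double edges:
`LLT(G) = Σ_{S ⊆ Ed(G)} (q−1)^{|S|} · LLT(G_S)` where `G_S` replaces the double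
edges in `S` by type I edges and deletes the remaining double edges; in
particular, for `K_n^⇒`,
`LLT(K_n^⇒) = Σ_S (q−1)^{|S|} Σ_{f : f(i)>f(j) ∀(i,j)∈S} x_{f(1)}⋯x_{f(n)}`. -/
theorem llt_double_edge_expansion {V : Type} [Fintype V] [DecidableEq V]
    (G : LLTGraph V)
    (h12 : Disjoint G.E1 G.E2) (h1d : Disjoint G.E1 G.Ed) (h2d : Disjoint G.E2 G.Ed)
    (N : ℕ) :
    (LLT G N = ∑ S ∈ G.Ed.powerset,
      (lltQ N - 1) ^ S.card * LLT ⟨G.E1 ∪ S, G.E2, ∅⟩ N) ∧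
    ∀ n : ℕ, LLT (KnGraph n) N = ∑ S ∈ (KnGraph n).Ed.powerset,
      (lltQ N - 1) ^ S.card *
        ∑ f : Fin n → Fin N,
          if ∀ e ∈ S, f e.2 < f e.1 then ∏ v, MvPolynomial.X (f v) else 0 := by
  refine ⟨llt_expand G h1d N, fun n => ?_⟩
  rw [llt_expand (KnGraph n) (Finset.disjoint_empty_left _) N]
  refine Finset.sum_congr rfl fun S hS => ?_
  congr 1
  unfold LLT
  refine Finset.sum_congr rfl fun f _ => ?_
  simp only [KnGraph, Finset.empty_union, Finset.prod_empty, mul_one, one_mul]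
  rw [Finset.prod_boole, ite_mul, one_mul, zero_mul]
  by_cases h : ∀ e ∈ S, f e.2 < f e.1 <;> simp [h]
end
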